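/- Let b : ℝⁿ × ℝ → ℝⁿ be continuously differentiable. Let φ̂ and ρ be functions on ℝⁿ × ℝ, twice continuously differentiable in x and continuously differentiable in t, with ρ everywhere positive, both satisfying the same Fokker–Planck equation ∂f/∂t + ∇·(b f) − (1/2)Δf = 0 on ℝⁿ × (t₀,t₁). Then the ratio ψ := φ̂/ρ satisfies the reverse-time space-time harmonic equation ∂ψ/∂t + (b − ∇ ln ρ)·∇ψ − (1/2)Δψ = 0 on ℝⁿ × (t₀,t₁). -/

import Mathlib

/-!
Write `φ̂ = ρ ψ`. The Leibniz rules for `∂ₜ`, `∇·` and `Δ` give, for the Fokker–Planck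
operator `FP`, the product formula `FP(ρ ψ) = ψ FP(ρ) + ρ (∂ₜψ + b·∇ψ − ½Δψ) − ∇ρ·∇ψ`.
Both `FP(φ̂)` and `FP(ρ)` vanish and `∇ρ = ρ ∇ ln ρ`, so dividing by `ρ > 0` leaves the
reverse-time equation for `ψ`.
-/

open Set
open scoped RealInnerProductSpace

/-- The Laplacian in `x` of `f : ℝⁿ → ℝ`: the sum of the second partial derivatives. -/
noncomputable def lap {n : ℕ} (f : EuclideanSpace ℝ (Fin n) → ℝ)
    (x : EuclideanSpace ℝ (Fin n)) : ℝ :=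
  ∑ i : Fin n,
    fderiv ℝ (fun y => fderiv ℝ f y (EuclideanSpace.single i 1)) x (EuclideanSpace.single i 1)

/-- The divergence in `x` of a vector field `w : ℝⁿ → ℝⁿ`: `∑ i, ∂wᵢ/∂xᵢ`. -/
noncomputable def diver {n : ℕ} (w : EuclideanSpace ℝ (Fin n) → EuclideanSpace ℝ (Fin n))
    (x : EuclideanSpace ℝ (Fin n)) : ℝ :=
  ∑ i : Fin n, fderiv ℝ (fun y => w y i) x (EuclideanSpace.single i 1)

theorem fderiv_fderiv_mul_apply {E : Type*} [NormedAddCommGroup E] [NormedSpace ℝ E]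
    {f g : E → ℝ} (hf : ContDiff ℝ 2 f) (hg : ContDiff ℝ 2 g) (x v : E) :
    fderiv ℝ (fun y => fderiv ℝ (fun z => f z * g z) y v) x v =
      fderiv ℝ (fun y => fderiv ℝ f y v) x v * g x + 2 * (fderiv ℝ f x v * fderiv ℝ g x v)
        + f x * fderiv ℝ (fun y => fderiv ℝ g y v) x v := by
  have hf₁ : Differentiable ℝ f := hf.differentiable two_ne_zero
  have hg₁ : Differentiable ℝ g := hg.differentiable two_ne_zero
  have hf₂ : Differentiable ℝ (fun y => fderiv ℝ f y v) :=
    ((hf.fderiv_right (m := 1) le_rfl).clm_apply contDiff_const).differentiable one_ne_zero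
  have hg₂ : Differentiable ℝ (fun y => fderiv ℝ g y v) :=
    ((hg.fderiv_right (m := 1) le_rfl).clm_apply contDiff_const).differentiable one_ne_zero
  have hprod : (fun y => fderiv ℝ (fun z => f z * g z) y v)
      = fun y => f y * fderiv ℝ g y v + g y * fderiv ℝ f y v := by
    funext y
    simp [fderiv_fun_mul (hf₁ y) (hg₁ y)]
  rw [hprod, HasFDerivAt.fderiv (f := fun y => f y * fderiv ℝ g y v + g y * fderiv ℝ f y v)
    (((hf₁ x).hasFDerivAt.mul (hg₂ x).hasFDerivAt).add
      ((hg₁ x).hasFDerivAt.mul (hf₂ x).hasFDerivAt))]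
  simp only [FunLike.coe_add, Pi.add_apply, FunLike.coe_smul, Pi.smul_apply, smul_eq_mul]
  ring

theorem gradient_log {F : Type*} [NormedAddCommGroup F] [InnerProductSpace ℝ F]
    [CompleteSpace F] {f : F → ℝ} {x : F} (hf : DifferentiableAt ℝ f x) (hx : f x ≠ 0) :
    gradient (fun y => Real.log (f y)) x = (f x)⁻¹ • gradient f x := by
  simp only [gradient, fderiv.log hf hx, map_smul]

section EuclideanSpace

variable {n : ℕ}

theorem EuclideanSpace.gradient_apply (f : EuclideanSpace ℝ (Fin n) → ℝ)
    (x : EuclideanSpace ℝ (Fin n)) (i : Fin n) :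
    gradient f x i = fderiv ℝ f x (EuclideanSpace.single i 1) := by
  rw [← inner_gradient_left, EuclideanSpace.inner_single_right]
  simp

theorem EuclideanSpace.inner_gradient_gradient (f g : EuclideanSpace ℝ (Fin n) → ℝ)
    (x : EuclideanSpace ℝ (Fin n)) :
    ⟪gradient f x, gradient g x⟫ =
      ∑ i, fderiv ℝ f x (EuclideanSpace.single i 1)
        * fderiv ℝ g x (EuclideanSpace.single i 1) := by
  simp only [PiLp.inner_apply, EuclideanSpace.gradient_apply, RCLike.inner_apply',
    conj_trivial]

theorem lap_mul {f g : EuclideanSpace ℝ (Fin n) → ℝ} (hf : ContDiff ℝ 2 f)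
    (hg : ContDiff ℝ 2 g) (x : EuclideanSpace ℝ (Fin n)) :
    lap (fun y => f y * g y) x =
      lap f x * g x + 2 * ⟪gradient f x, gradient g x⟫ + f x * lap g x := by
  simp only [lap, fderiv_fderiv_mul_apply hf hg, EuclideanSpace.inner_gradient_gradient,
    Finset.sum_add_distrib, Finset.sum_mul, Finset.mul_sum]

theorem diver_smul {f : EuclideanSpace ℝ (Fin n) → ℝ}
    {w : EuclideanSpace ℝ (Fin n) → EuclideanSpace ℝ (Fin n)} {x : EuclideanSpace ℝ (Fin n)}
    (hf : DifferentiableAt ℝ f x) (hw : DifferentiableAt ℝ w x) :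
    diver (fun y => f y • w y) x = f x * diver w x + ⟪w x, gradient f x⟫ := by
  have hwi := differentiableAt_euclidean.mp hw
  simp only [diver, PiLp.smul_apply, smul_eq_mul, fderiv_fun_mul hf (hwi _),
    PiLp.inner_apply, EuclideanSpace.gradient_apply, Finset.mul_sum, ← Finset.sum_add_distrib]
  simp [mul_comm]

noncomputable def fokkerPlanckOp
    (b : EuclideanSpace ℝ (Fin n) → ℝ → EuclideanSpace ℝ (Fin n))
    (f : EuclideanSpace ℝ (Fin n) → ℝ → ℝ) (x : EuclideanSpace ℝ (Fin n)) (t : ℝ) : ℝ :=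
  deriv (fun s => f x s) t + diver (fun y => f y t • b y t) x
    - (1 / 2) * lap (fun y => f y t) x

theorem fokkerPlanckOp_mul {b : EuclideanSpace ℝ (Fin n) → ℝ → EuclideanSpace ℝ (Fin n)}
    {ρ ψ : EuclideanSpace ℝ (Fin n) → ℝ → ℝ} {x : EuclideanSpace ℝ (Fin n)} {t : ℝ}
    (hb : DifferentiableAt ℝ (fun y => b y t) x)
    (hρx : ContDiff ℝ 2 fun y => ρ y t) (hψx : ContDiff ℝ 2 fun y => ψ y t)
    (hρt : DifferentiableAt ℝ (fun s => ρ x s) t)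
    (hψt : DifferentiableAt ℝ (fun s => ψ x s) t) :
    fokkerPlanckOp b (fun y s => ρ y s * ψ y s) x t =
      ψ x t * fokkerPlanckOp b ρ x t
        + ρ x t * (deriv (fun s => ψ x s) t + ⟪b x t, gradient (fun y => ψ y t) x⟫
          - (1 / 2) * lap (fun y => ψ y t) x)
        - ⟪gradient (fun y => ρ y t) x, gradient (fun y => ψ y t) x⟫ := by
  have hρ₁ : DifferentiableAt ℝ (fun y => ρ y t) x := hρx.differentiable two_ne_zero x
  have hψ₁ : DifferentiableAt ℝ (fun y => ψ y t) x := hψx.differentiable two_ne_zero x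
  have hflux : (fun y => (ρ y t * ψ y t) • b y t) = fun y => ψ y t • (ρ y t • b y t) := by
    funext y
    rw [smul_smul, mul_comm]
  simp only [fokkerPlanckOp]
  rw [deriv_fun_mul hρt hψt, hflux, diver_smul (w := fun y => ρ y t • b y t) hψ₁ (hρ₁.smul hb),
    real_inner_smul_left, lap_mul hρx hψx]
  ring

end EuclideanSpace

/-- If `φ̂` and `ρ > 0` both solve the Fokker–Planck equation
`∂f/∂t + ∇·(b f) − (1/2)Δf = 0`, then `ψ := φ̂/ρ` solves the reverse-time space-time
harmonic equation `∂ψ/∂t + (b − ∇ ln ρ)·∇ψ − (1/2)Δψ = 0` on `ℝⁿ × (t₀,t₁)`. -/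
theorem ratio_of_fokker_planck_solutions_reverse_harmonic {n : ℕ} (t₀ t₁ : ℝ)
    (b : EuclideanSpace ℝ (Fin n) → ℝ → EuclideanSpace ℝ (Fin n))
    (φh ρ : EuclideanSpace ℝ (Fin n) → ℝ → ℝ)
    (hb : ContDiff ℝ 1 fun p : EuclideanSpace ℝ (Fin n) × ℝ => b p.1 p.2)
    (hρpos : ∀ x t, 0 < ρ x t)
    (hφx : ∀ t : ℝ, ContDiff ℝ 2 fun x => φh x t)
    (hφt : ∀ x, ContDiff ℝ 1 fun t => φh x t)
    (hρx : ∀ t : ℝ, ContDiff ℝ 2 fun x => ρ x t)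
    (hρt : ∀ x, ContDiff ℝ 1 fun t => ρ x t)
    (hφpde : ∀ x, ∀ t ∈ Set.Ioo t₀ t₁,
      deriv (fun s => φh x s) t + diver (fun y => φh y t • b y t) x
        - (1 / 2) * lap (fun y => φh y t) x = 0)
    (hρpde : ∀ x, ∀ t ∈ Set.Ioo t₀ t₁,
      deriv (fun s => ρ x s) t + diver (fun y => ρ y t • b y t) x
        - (1 / 2) * lap (fun y => ρ y t) x = 0) :
    ∀ x, ∀ t ∈ Set.Ioo t₀ t₁,
      deriv (fun s => φh x s / ρ x s) t
        + ⟪b x t - gradient (fun y => Real.log (ρ y t)) x,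
            gradient (fun y => φh y t / ρ y t) x⟫
        - (1 / 2) * lap (fun y => φh y t / ρ y t) x = 0 := by
  intro x t ht
  have hρ₀ : ρ x t ≠ 0 := (hρpos x t).ne'
  have hbt : DifferentiableAt ℝ (fun y => b y t) x :=
    (hb.comp (contDiff_id.prodMk contDiff_const)).differentiable one_ne_zero x
  have hρt' : DifferentiableAt ℝ (fun s => ρ x s) t := (hρt x).differentiable one_ne_zero t
  have hψx : ContDiff ℝ 2 fun y => φh y t / ρ y t :=
    (hφx t).div (hρx t) fun y => (hρpos y t).ne'
  have hψt : DifferentiableAt ℝ (fun s => φh x s / ρ x s) t :=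
    ((hφt x).differentiable one_ne_zero t).div hρt' hρ₀
  have hφ : φh = fun y s => ρ y s * (φh y s / ρ y s) := by
    funext y s
    rw [mul_div_cancel₀ _ (hρpos y s).ne']
  have hproduct :=
    fokkerPlanckOp_mul (ψ := fun y s => φh y s / ρ y s) hbt (hρx t) hψx hρt' hψt
  rw [← hφ, show fokkerPlanckOp b φh x t = 0 from hφpde x t ht,
    show fokkerPlanckOp b ρ x t = 0 from hρpde x t ht] at hproduct
  rw [gradient_log ((hρx t).differentiable two_ne_zero x) hρ₀, inner_sub_left,
    real_inner_smul_left]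
  field_simp
  linarith
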